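/- arXiv:2302.05372 — 5 statements merged into one kernel-verified Lean document; each statement's English description precedes it below -/
import Mathlib

section
/- Fix p, q ∈ (1,∞) with 1/p + 1/q = 1, a finite set S, a nominal probability vector P₀ ∈ Δ_S, a radius β ≥ 0, and V ∈ ℝ^S. Define the uncertainty set P := { y ∈ ℝ^S : ∑_s y(s) = 0, P₀ + y ≥ 0, ‖y‖_p ≤ β }. Then min_{y ∈ P} ⟨P₀ + y, V⟩ = max_{μ ∈ ℝ^S, μ ≥ 0} ( ⟨P₀, V - μ⟩ - β·sp_q(V - μ) ), where sp_q(w) := min_{ω ∈ ℝ} ‖w - ω·1‖_q. -/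
/-!
Weak duality is Hölder's inequality: if `∑ y = 0` then `⟨y, w⟩ = ⟨y, w - ω⟩ ≤ ‖y‖_p ‖w - ω‖_q`
for every shift `ω`, hence `⟨y, w⟩ ≤ ‖y‖_p sp_q(w)`. Equality is attained at
`y = c · sign(w - ω₀) |w - ω₀|^(q-1)`, where `ω₀` is the shift at which these signed powers sum to
zero; such `ω₀` exists by the intermediate value theorem and minimises `ω ↦ ‖w - ω‖_q` by
convexity. Consequently, dualising only the constraint `P₀ + y ≥ 0` with a multiplier `μ ≥ 0`
leaves an inner minimum equal to `⟨P₀, V - μ⟩ - β sp_q(V - μ)`. A multiplier that closes the gap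
exists by Lagrange duality under Slater's condition (for `β > 0` a small multiple of
`uniform - P₀` is strictly feasible), proved by separating `(0, v)` from the open convex set of
values strictly dominating some `(constraints(y), objective(y))`.
-/

/-- The `L_p` norm of a vector on a finite index set. -/
noncomputable def lpNorm {ι : Type*} [Fintype ι] (p : ℝ) (v : ι → ℝ) : ℝ :=
  (∑ i, |v i| ^ p) ^ (1 / p)

/-- The span seminorm `sp_q(v) := inf_{ω ∈ ℝ} ‖v - ω·1‖_q`. -/
noncomputable def spanSeminorm {ι : Type*} [Fintype ι] (q : ℝ) (v : ι → ℝ) : ℝ :=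
  ⨅ ω : ℝ, lpNorm q (fun i => v i - ω)

open Finset Set

section OrderedField

variable {α : Type*} [Field α] [LinearOrder α] [IsStrictOrderedRing α]

lemma le_of_forall_pos_lt_add_mul {a b c : α} (h : ∀ ε > 0, a < b + ε * c) : a ≤ b := by
  refine le_of_forall_pos_lt_add fun δ hδ => ?_
  have hε : 0 < δ / (|c| + 1) := by positivity
  calc a < b + δ / (|c| + 1) * c := h _ hε
    _ ≤ b + δ / (|c| + 1) * (|c| + 1) := by gcongr; linarith [le_abs_self c]
    _ = b + δ := by rw [div_mul_cancel₀ _ (by positivity)]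

lemma nonneg_of_forall_pos_lt_add_mul {a b c : α} (h : ∀ T > 0, a < b + T * c) : 0 ≤ c := by
  by_contra! hc
  have hT : 0 < (|b - a| + 1) / -c := div_pos (by positivity) (neg_pos.mpr hc)
  have := h _ hT
  rw [div_mul_eq_mul_div, div_neg, mul_div_cancel_right₀ _ hc.ne] at this
  linarith [le_abs_self (b - a)]

end OrderedField

lemma LinearMap.apply_prod_eq_sum {R ι : Type*} [CommSemiring R] [Fintype ι] [DecidableEq ι]
    (ℓ : ((ι → R) × R) →ₗ[R] R) (u : ι → R) (t : R) :
    ℓ (u, t) = ∑ i, ℓ (Pi.single i 1, 0) * u i + ℓ (0, 1) * t := by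
  have : (u, t) = ∑ i, u i • ((Pi.single i 1 : ι → R), (0 : R)) + t • (0, 1) := by
    ext <;> simp [Prod.fst_sum, Prod.snd_sum, Finset.sum_apply, Pi.single_apply]
  simp only [this, map_add, map_sum, map_smul, smul_eq_mul, mul_comm]

section Lagrange

variable {E ι : Type*} {K : Set E} {f : E → ℝ} {g : ι → E → ℝ}

lemma isOpen_setOf_exists_forall_lt [Fintype ι] :
    IsOpen {x : (ι → ℝ) × ℝ | ∃ y ∈ K, (∀ i, g i y < x.1 i) ∧ f y < x.2} := by
  have : {x : (ι → ℝ) × ℝ | ∃ y ∈ K, (∀ i, g i y < x.1 i) ∧ f y < x.2} =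
      ⋃ y ∈ K, (univ.pi fun i => Ioi (g i y)) ×ˢ Ioi (f y) := by
    ext x
    simp only [mem_ofPred_eq, mem_iUnion, mem_prod, mem_pi, mem_univ, true_implies,
      Set.mem_Ioi, exists_prop]
  rw [this]
  exact isOpen_biUnion fun y _ =>
    (isOpen_set_pi finite_univ fun i _ => isOpen_Ioi).prod isOpen_Ioi

variable [AddCommGroup E] [Module ℝ E]

lemma convex_setOf_exists_forall_lt (hf : ConvexOn ℝ K f) (hg : ∀ i, ConvexOn ℝ K (g i)) :
    Convex ℝ {x : (ι → ℝ) × ℝ | ∃ y ∈ K, (∀ i, g i y < x.1 i) ∧ f y < x.2} := by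
  rintro x₁ ⟨y₁, hy₁, hg₁, hf₁⟩ x₂ ⟨y₂, hy₂, hg₂, hf₂⟩ a b ha hb hab
  have combo_lt {u₁ u₂ w₁ w₂ : ℝ} (h₁ : u₁ < w₁) (h₂ : u₂ < w₂) :
      a * u₁ + b * u₂ < a * w₁ + b * w₂ := by
    have := convex_Ioi (0 : ℝ) (sub_pos.2 h₁) (sub_pos.2 h₂) ha hb hab
    simp only [Set.mem_Ioi, smul_eq_mul] at this
    linarith
  refine ⟨a • y₁ + b • y₂, hf.1 hy₁ hy₂ ha hb hab, fun i => ?_, ?_⟩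
  · exact ((hg i).2 hy₁ hy₂ ha hb hab).trans_lt (combo_lt (hg₁ i) (hg₂ i))
  · exact (hf.2 hy₁ hy₂ ha hb hab).trans_lt (combo_lt hf₁ hf₂)

variable [Fintype ι]

theorem exists_fritzJohn_multipliers (hf : ConvexOn ℝ K f) (hg : ∀ i, ConvexOn ℝ K (g i))
    (hK : K.Nonempty) {v : ℝ} (hv : ∀ y ∈ K, (∀ i, g i y ≤ 0) → v ≤ f y) :
    ∃ (m : ι → ℝ) (lam : ℝ), (∀ i, 0 ≤ m i) ∧ 0 ≤ lam ∧ (m ≠ 0 ∨ lam ≠ 0) ∧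
      ∀ y ∈ K, lam * v ≤ ∑ i, m i * g i y + lam * f y := by
  classical
  set C := {x : (ι → ℝ) × ℝ | ∃ y ∈ K, (∀ i, g i y < x.1 i) ∧ f y < x.2}
  have hvC : ((0 : ι → ℝ), v) ∉ C := fun ⟨y, hy, hgy, hfy⟩ =>
    (hv y hy fun i => (hgy i).le).not_gt hfy
  obtain ⟨ℓ, hℓ⟩ := geometric_hahn_banach_point_open
    (convex_setOf_exists_forall_lt hf hg) isOpen_setOf_exists_forall_lt hvC
  set m : ι → ℝ := fun i => ℓ (Pi.single i 1, 0)
  set lam : ℝ := ℓ (0, 1)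
  have hℓ_apply (u : ι → ℝ) (t : ℝ) : ℓ (u, t) = ∑ i, m i * u i + lam * t :=
    LinearMap.apply_prod_eq_sum (ℓ : ((ι → ℝ) × ℝ) →ₗ[ℝ] ℝ) u t
  set G : E → (ι → ℝ) × ℝ := fun y => (fun i => g i y, f y)
  have hGC : ∀ y ∈ K, ∀ ε > (0 : ℝ), G y + ε • 1 ∈ C := fun y hy ε hε =>
    ⟨y, hy, fun i => by simp [G, hε], by simp [G, hε]⟩
  have hC_add : ∀ x ∈ C, ∀ d : (ι → ℝ) × ℝ, 0 ≤ d → x + d ∈ C := by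
    rintro x ⟨y, hy, hgy, hfy⟩ d hd
    exact ⟨y, hy, fun i => (hgy i).trans_le (le_add_of_nonneg_right (hd.1 i)),
      hfy.trans_le (le_add_of_nonneg_right hd.2)⟩
  obtain ⟨y₀, hy₀⟩ := hK
  have hx₀ := hGC y₀ hy₀ 1 one_pos
  have hm (i : ι) : 0 ≤ m i := nonneg_of_forall_pos_lt_add_mul fun T hT => by
    have := hℓ _ (hC_add _ hx₀ (T • (Pi.single i 1, 0))
      (smul_nonneg hT.le (by simp [Prod.le_def, Pi.single_nonneg])))
    rwa [map_add, map_smul, smul_eq_mul] at this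
  have hlam : 0 ≤ lam := nonneg_of_forall_pos_lt_add_mul fun T hT => by
    have := hℓ _ (hC_add _ hx₀ (T • (0, 1)) (smul_nonneg hT.le (by simp [Prod.le_def])))
    rwa [map_add, map_smul, smul_eq_mul] at this
  refine ⟨m, lam, hm, hlam, ?_, fun y hy => ?_⟩
  · by_contra! h
    have := hℓ _ hx₀
    simp [hℓ_apply, h.1, h.2] at this
  · have hGy : ℓ (0, v) ≤ ℓ (G y) := le_of_forall_pos_lt_add_mul fun ε hε => by
      have := hℓ _ (hGC y hy ε hε)
      rwa [map_add, map_smul, smul_eq_mul] at this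
    simpa [hℓ_apply, G] using hGy

theorem exists_lagrange_multipliers_of_slater (hf : ConvexOn ℝ K f)
    (hg : ∀ i, ConvexOn ℝ K (g i)) {y₀ : E} (hy₀ : y₀ ∈ K) (hslater : ∀ i, g i y₀ < 0) {v : ℝ}
    (hv : ∀ y ∈ K, (∀ i, g i y ≤ 0) → v ≤ f y) :
    ∃ μ : ι → ℝ, (∀ i, 0 ≤ μ i) ∧ ∀ y ∈ K, v ≤ f y + ∑ i, μ i * g i y := by
  obtain ⟨m, lam, hm, hlam, hne, hmv⟩ := exists_fritzJohn_multipliers hf hg ⟨y₀, hy₀⟩ hv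
  have hlam_pos : 0 < lam := by
    refine hlam.lt_of_ne' fun h0 => hne.resolve_right (not_not.2 h0) (funext fun i => ?_)
    have hterm (i : ι) : m i * g i y₀ ≤ 0 := mul_nonpos_of_nonneg_of_nonpos (hm i) (hslater i).le
    have hsum : ∑ i, m i * g i y₀ = 0 :=
      (sum_nonpos fun i _ => hterm i).antisymm (by simpa [h0] using hmv y₀ hy₀)
    have := (sum_eq_zero_iff_of_nonpos fun i _ => hterm i).1 hsum i (mem_univ i)
    exact (mul_eq_zero.1 this).resolve_right (hslater i).ne
  refine ⟨fun i => m i / lam, fun i => div_nonneg (hm i) hlam, fun y hy => ?_⟩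
  have h := hmv y hy
  rw [← mul_le_mul_iff_right₀ hlam_pos, mul_add, mul_sum]
  simpa [mul_div_cancel₀ _ hlam_pos.ne', ← mul_assoc, add_comm] using h

end Lagrange

section LpNorm

variable {ι : Type*} [Fintype ι] {p q : ℝ}

lemma lpNorm_nonneg (p : ℝ) (v : ι → ℝ) : 0 ≤ lpNorm p v := by
  unfold lpNorm; positivity

lemma lpNorm_zero (hp : p ≠ 0) : lpNorm p (0 : ι → ℝ) = 0 := by
  simp [lpNorm, Real.zero_rpow hp, hp]

lemma lpNorm_neg (p : ℝ) (v : ι → ℝ) : lpNorm p (-v) = lpNorm p v := by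
  simp [lpNorm]

lemma lpNorm_smul (hp : p ≠ 0) {t : ℝ} (ht : 0 ≤ t) (v : ι → ℝ) :
    lpNorm p (t • v) = t * lpNorm p v := by
  simp only [lpNorm, Pi.smul_apply, smul_eq_mul, abs_mul, abs_of_nonneg ht,
    Real.mul_rpow ht (abs_nonneg _), ← mul_sum]
  rw [Real.mul_rpow (by positivity) (by positivity), ← Real.rpow_mul ht, mul_one_div_cancel hp,
    Real.rpow_one]

lemma convexOn_lpNorm (hp : 1 ≤ p) : ConvexOn ℝ Set.univ (lpNorm (ι := ι) p) := by
  refine ⟨convex_univ, fun u _ v _ a b ha hb _ => ?_⟩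
  have hp0 : p ≠ 0 := by linarith
  calc lpNorm p (a • u + b • v) ≤ lpNorm p (a • u) + lpNorm p (b • v) :=
        Real.Lp_add_le univ _ _ hp
    _ = a • lpNorm p u + b • lpNorm p v := by
        rw [lpNorm_smul hp0 ha, lpNorm_smul hp0 hb, smul_eq_mul, smul_eq_mul]

lemma convex_setOf_sum_eq_zero_and_lpNorm_le (hp : 1 ≤ p) (β : ℝ) :
    Convex ℝ {y : ι → ℝ | ∑ i, y i = 0 ∧ lpNorm p y ≤ β} := by
  rintro y₁ ⟨hs₁, hn₁⟩ y₂ ⟨hs₂, hn₂⟩ a b ha hb hab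
  refine ⟨by simp [sum_add_distrib, ← mul_sum, hs₁, hs₂], ?_⟩
  calc lpNorm p (a • y₁ + b • y₂) ≤ a • lpNorm p y₁ + b • lpNorm p y₂ :=
        (convexOn_lpNorm hp).2 trivial trivial ha hb hab
    _ ≤ β := convex_Iic β hn₁ hn₂ ha hb hab

lemma spanSeminorm_nonneg (q : ℝ) (v : ι → ℝ) : 0 ≤ spanSeminorm q v :=
  le_ciInf fun _ => lpNorm_nonneg _ _

lemma spanSeminorm_le (q : ℝ) (v : ι → ℝ) (ω : ℝ) :
    spanSeminorm q v ≤ lpNorm q (fun i => v i - ω) :=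
  ciInf_le ⟨0, by rintro _ ⟨ω, rfl⟩; exact lpNorm_nonneg _ _⟩ ω

end LpNorm

/-- `sign t * |t| ^ r`, written so that continuity is evident. -/
noncomputable def signedRpow (r t : ℝ) : ℝ := max t 0 ^ r - max (-t) 0 ^ r

section SignedRpow

variable {q r : ℝ}

lemma signedRpow_neg (r t : ℝ) : signedRpow r (-t) = -signedRpow r t := by
  simp [signedRpow]

lemma signedRpow_of_nonneg (hr : r ≠ 0) {t : ℝ} (ht : 0 ≤ t) : signedRpow r t = t ^ r := by
  simp [signedRpow, ht, Real.zero_rpow hr]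

lemma signedRpow_nonneg (hr : 0 ≤ r) {t : ℝ} (ht : 0 ≤ t) : 0 ≤ signedRpow r t :=
  sub_nonneg.2 <| Real.rpow_le_rpow (le_max_right _ _) (max_le_max (by linarith) le_rfl) hr

lemma signedRpow_nonpos (hr : 0 ≤ r) {t : ℝ} (ht : t ≤ 0) : signedRpow r t ≤ 0 := by
  simpa [signedRpow_neg] using signedRpow_nonneg hr (neg_nonneg.2 ht)

lemma continuous_signedRpow (hr : 0 < r) : Continuous (signedRpow r) :=
  ((continuous_id.max continuous_const).rpow_const fun _ => Or.inr hr.le).sub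
    ((continuous_neg.max continuous_const).rpow_const fun _ => Or.inr hr.le)

lemma abs_signedRpow (hr : r ≠ 0) (t : ℝ) : |signedRpow r t| = |t| ^ r := by
  rcases le_total 0 t with ht | ht
  · rw [signedRpow_of_nonneg hr ht, abs_of_nonneg ht, abs_of_nonneg (by positivity)]
  · rw [← abs_neg, ← signedRpow_neg, signedRpow_of_nonneg hr (neg_nonneg.2 ht),
      abs_of_nonneg (Real.rpow_nonneg (neg_nonneg.2 ht) _), abs_of_nonpos ht]

lemma signedRpow_sub_one_mul_self (hq : 1 < q) (t : ℝ) :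
    signedRpow (q - 1) t * t = |t| ^ q := by
  have key {t : ℝ} (ht : 0 ≤ t) : signedRpow (q - 1) t * t = |t| ^ q := by
    rw [signedRpow_of_nonneg (by linarith) ht, abs_of_nonneg ht,
      ← Real.rpow_add_one' ht (by linarith), sub_add_cancel]
  rcases le_total 0 t with ht | ht
  · exact key ht
  · simpa [signedRpow_neg] using key (neg_nonneg.2 ht)

/-- The subgradient inequality for `|·| ^ q`, whose derivative is `q * signedRpow (q - 1)`. -/
lemma abs_rpow_add_mul_signedRpow_le (hq : 1 < q) (a b : ℝ) :
    |b| ^ q + q * signedRpow (q - 1) b * (a - b) ≤ |a| ^ q := by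
  have key {a b : ℝ} (hb : 0 ≤ b) : |b| ^ q + q * signedRpow (q - 1) b * (a - b) ≤ |a| ^ q := by
    rw [signedRpow_of_nonneg (by linarith) hb, abs_of_nonneg hb]
    rcases hb.eq_or_lt with rfl | hb
    · simpa [Real.zero_rpow (by linarith : q ≠ 0), Real.zero_rpow (by linarith : q - 1 ≠ 0)]
        using Real.rpow_nonneg (abs_nonneg a) q
    have bernoulli := one_add_mul_self_le_rpow_one_add
      (by linarith [div_nonneg (abs_nonneg a) hb.le] : -1 ≤ |a| / b - 1) hq.le
    rw [add_sub_cancel, Real.div_rpow (abs_nonneg a) hb.le, le_div_iff₀ (by positivity)]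
      at bernoulli
    have hbq : b ^ q = b ^ (q - 1) * b := by
      rw [← Real.rpow_add_one' hb.le (by linarith), sub_add_cancel]
    have : q * b ^ (q - 1) * (a - b) ≤ q * b ^ (q - 1) * (|a| - b) := by
      gcongr
      exact le_abs_self a
    calc b ^ q + q * b ^ (q - 1) * (a - b) ≤ b ^ q + q * b ^ (q - 1) * (|a| - b) := by linarith
      _ = (1 + q * (|a| / b - 1)) * b ^ q := by field_simp; rw [hbq]; ring
      _ ≤ |a| ^ q := bernoulli
  rcases le_total 0 b with hb | hb
  · exact key hb
  · have := key (a := -a) (neg_nonneg.2 hb)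
    rw [signedRpow_neg, abs_neg, abs_neg] at this
    linarith

end SignedRpow

section SpanSeminorm

variable {ι : Type*} [Fintype ι] {p q : ℝ}

lemma sum_mul_sub_const {y : ι → ℝ} (hy : ∑ i, y i = 0) (w : ι → ℝ) (ω : ℝ) :
    ∑ i, y i * (w i - ω) = ∑ i, y i * w i := by
  simp only [mul_sub, sum_sub_distrib, ← sum_mul, hy, zero_mul, sub_zero]

lemma sum_mul_le_lpNorm_mul_spanSeminorm (hpq : p.HolderConjugate q) {y : ι → ℝ}
    (hy : ∑ i, y i = 0) (w : ι → ℝ) : ∑ i, y i * w i ≤ lpNorm p y * spanSeminorm q w := by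
  rw [spanSeminorm, Real.mul_iInf_of_nonneg (lpNorm_nonneg p y)]
  refine le_ciInf fun ω => ?_
  rw [← sum_mul_sub_const hy w ω]
  exact Real.inner_le_Lp_mul_Lq univ _ _ hpq

lemma exists_sum_signedRpow_sub_eq_zero [Nonempty ι] {r : ℝ} (hr : 0 < r) (w : ι → ℝ) :
    ∃ ω, ∑ i, signedRpow r (w i - ω) = 0 := by
  obtain ⟨i₀, hi₀⟩ := Finite.exists_min w
  obtain ⟨i₁, hi₁⟩ := Finite.exists_max w
  have hF : Continuous fun ω => ∑ i, signedRpow r (w i - ω) :=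
    continuous_finsetSum _ fun i _ =>
      (continuous_signedRpow hr).comp (continuous_const.sub continuous_id)
  obtain ⟨ω, -, hω⟩ := intermediate_value_Icc' (hi₀ i₁) hF.continuousOn
    ⟨sum_nonpos fun i _ => signedRpow_nonpos hr.le (by linarith [hi₁ i]),
      sum_nonneg fun i _ => signedRpow_nonneg hr.le (by linarith [hi₀ i])⟩
  exact ⟨ω, hω⟩

lemma spanSeminorm_eq_lpNorm_of_sum_signedRpow_eq_zero (hq : 1 < q) {w : ι → ℝ} {ω₀ : ℝ}
    (h : ∑ i, signedRpow (q - 1) (w i - ω₀) = 0) :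
    spanSeminorm q w = lpNorm q (fun i => w i - ω₀) := by
  refine (spanSeminorm_le q w ω₀).antisymm (le_ciInf fun ω => ?_)
  have hsum : ∑ i, |w i - ω₀| ^ q ≤ ∑ i, |w i - ω| ^ q := calc
    ∑ i, |w i - ω₀| ^ q = ∑ i, (|w i - ω₀| ^ q +
        q * signedRpow (q - 1) (w i - ω₀) * ((w i - ω) - (w i - ω₀))) := by
      simp only [sub_sub_sub_cancel_left, sum_add_distrib, ← sum_mul, ← mul_sum, h, mul_zero,
        zero_mul, add_zero]
    _ ≤ ∑ i, |w i - ω| ^ q := sum_le_sum fun i _ => abs_rpow_add_mul_signedRpow_le hq _ _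
  exact Real.rpow_le_rpow (by positivity) hsum (by simp only [one_div]; positivity)

lemma lpNorm_signedRpow (hpq : p.HolderConjugate q) (v : ι → ℝ) :
    lpNorm p (fun i => signedRpow (q - 1) (v i)) = (∑ i, |v i| ^ q) ^ (1 / p) := by
  unfold lpNorm
  congr 1
  refine sum_congr rfl fun i _ => ?_
  rw [abs_signedRpow hpq.symm.sub_one_ne_zero, ← Real.rpow_mul (abs_nonneg _),
    hpq.symm.sub_one_mul_conj]

lemma exists_lpNorm_le_sum_mul_eq_mul_spanSeminorm [Nonempty ι] (hpq : p.HolderConjugate q)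
    {β : ℝ} (hβ : 0 ≤ β) (w : ι → ℝ) :
    ∃ y : ι → ℝ, ∑ i, y i = 0 ∧ lpNorm p y ≤ β ∧ ∑ i, y i * w i = β * spanSeminorm q w := by
  have hq : 1 < q := hpq.symm.lt
  obtain ⟨ω₀, hω₀⟩ := exists_sum_signedRpow_sub_eq_zero (sub_pos.2 hq) w
  set z : ι → ℝ := fun i => signedRpow (q - 1) (w i - ω₀)
  set G := ∑ i, |w i - ω₀| ^ q
  have hG : 0 ≤ G := by positivity
  have hzw : ∑ i, z i * w i = G := by
    rw [← sum_mul_sub_const hω₀ w ω₀]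
    exact sum_congr rfl fun i _ => signedRpow_sub_one_mul_self hq _
  have hGq : G ^ (1 / q) = G / G ^ (1 / p) := by
    have h1q : 1 / q = 1 - 1 / p := by rw [one_div, one_div]; linarith [hpq.inv_add_inv_eq_one]
    rw [h1q, Real.rpow_sub' hG (h1q ▸ hpq.symm.one_div_ne_zero), Real.rpow_one]
  refine ⟨(β / G ^ (1 / p)) • z, ?_, ?_, ?_⟩
  · simp [z, ← mul_sum, hω₀]
  · rw [lpNorm_smul hpq.ne_zero (by positivity), lpNorm_signedRpow hpq]
    rcases (Real.rpow_nonneg hG (1 / p)).eq_or_lt with h | h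
    · rw [← h, div_zero, zero_mul]
      exact hβ
    · rw [div_mul_cancel₀ _ h.ne']
  · simp only [Pi.smul_apply, smul_eq_mul, mul_assoc, ← mul_sum, hzw,
      spanSeminorm_eq_lpNorm_of_sum_signedRpow_eq_zero hq hω₀]
    rw [lpNorm, hGq]
    ring

end SpanSeminorm

section Duality

variable {S : Type*} [Fintype S] {p q β : ℝ} {P₀ V : S → ℝ}

lemma exists_slater_point [Nonempty S] (hp : p ≠ 0) (hP₀ : ∀ s, 0 ≤ P₀ s)
    (hP₀sum : ∑ s, P₀ s = 1) (hβ : 0 < β) :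
    ∃ y : S → ℝ, (∑ s, y s = 0 ∧ lpNorm p y ≤ β) ∧ ∀ s, 0 < P₀ s + y s := by
  set n : ℝ := (Fintype.card S : ℝ)
  have hn : 0 < n := Nat.cast_pos.2 Fintype.card_pos
  set u : S → ℝ := fun s => 1 / n - P₀ s
  set t := β / (β + lpNorm p u)
  have hL := lpNorm_nonneg p u
  have ht : 0 < t := by positivity
  have ht1 : t ≤ 1 := div_le_one_of_le₀ (by linarith) (by positivity)
  refine ⟨t • u, ⟨?_, ?_⟩, fun s => ?_⟩
  · simp [u, ← mul_sum, sum_sub_distrib, hP₀sum, n, hn.ne']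
  · rw [lpNorm_smul hp ht.le, div_mul_eq_mul_div, div_le_iff₀ (by positivity)]
    nlinarith
  · have : P₀ s + (t • u) s = (1 - t) * P₀ s + t / n := by simp [u]; ring
    rw [this]
    have := hP₀ s
    have : 0 < t / n := by positivity
    nlinarith

lemma dual_value_le_primal_value (hpq : p.HolderConjugate q) {y μ : S → ℝ}
    (hy : ∑ s, y s = 0) (hPy : ∀ s, 0 ≤ P₀ s + y s) (hyβ : lpNorm p y ≤ β)
    (hμ : ∀ s, 0 ≤ μ s) :
    ∑ s, P₀ s * (V s - μ s) - β * spanSeminorm q (fun s => V s - μ s) ≤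
      ∑ s, (P₀ s + y s) * V s := by
  set w : S → ℝ := fun s => V s - μ s
  have holder : ∑ s, -y s * w s ≤ lpNorm p y * spanSeminorm q w := by
    simpa [lpNorm_neg] using sum_mul_le_lpNorm_mul_spanSeminorm hpq (y := -y) (by simp [hy]) w
  calc ∑ s, P₀ s * w s - β * spanSeminorm q w
      ≤ ∑ s, P₀ s * w s - lpNorm p y * spanSeminorm q w := by
        gcongr
        exact spanSeminorm_nonneg q w
    _ ≤ ∑ s, (P₀ s + y s) * w s := by
        simp only [add_mul, sum_add_distrib, neg_mul, sum_neg_distrib] at holder ⊢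
        linarith
    _ ≤ ∑ s, (P₀ s + y s) * V s :=
        sum_le_sum fun s _ => mul_le_mul_of_nonneg_left (by linarith [hμ s]) (hPy s)

lemma exists_dual_value_ge [Nonempty S] (hpq : p.HolderConjugate q) (hP₀ : ∀ s, 0 ≤ P₀ s)
    (hP₀sum : ∑ s, P₀ s = 1) (hβ : 0 ≤ β) {v : ℝ}
    (hv : ∀ y : S → ℝ, ∑ s, y s = 0 → (∀ s, 0 ≤ P₀ s + y s) → lpNorm p y ≤ β →
      v ≤ ∑ s, (P₀ s + y s) * V s) :
    ∃ μ : S → ℝ, (∀ s, 0 ≤ μ s) ∧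
      v ≤ ∑ s, P₀ s * (V s - μ s) - β * spanSeminorm q (fun s => V s - μ s) := by
  rcases hβ.eq_or_lt with rfl | hβ
  · refine ⟨0, fun _ => le_rfl, ?_⟩
    simpa using hv 0 (by simp) (by simpa using hP₀) (by rw [lpNorm_zero hpq.ne_zero])
  set K := {y : S → ℝ | ∑ s, y s = 0 ∧ lpNorm p y ≤ β}
  have hK : Convex ℝ K := convex_setOf_sum_eq_zero_and_lpNorm_le hpq.lt.le β
  have hf : ConvexOn ℝ K fun y => ∑ s, (P₀ s + y s) * V s :=
    ⟨hK, fun y₁ _ y₂ _ a b _ _ hab => le_of_eq <| by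
      simp only [Pi.add_apply, Pi.smul_apply, smul_eq_mul, mul_sum, ← sum_add_distrib]
      exact sum_congr rfl fun s _ => by linear_combination (-(P₀ s * V s)) * hab⟩
  have hg (s : S) : ConvexOn ℝ K fun y => -(P₀ s + y s) :=
    ⟨hK, fun y₁ _ y₂ _ a b _ _ hab => le_of_eq <| by
      simp only [Pi.add_apply, Pi.smul_apply, smul_eq_mul]
      linear_combination (P₀ s) * hab⟩
  obtain ⟨y₀, hy₀, hy₀_pos⟩ := exists_slater_point hpq.ne_zero hP₀ hP₀sum hβ
  obtain ⟨μ, hμ, hμv⟩ := exists_lagrange_multipliers_of_slater hf hg hy₀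
    (fun s => neg_neg_of_pos (hy₀_pos s))
    (fun y ⟨hs, hn⟩ hy => hv y hs (fun s => neg_nonpos.1 (hy s)) hn)
  obtain ⟨y, hy, hyβ, hyw⟩ :=
    exists_lpNorm_le_sum_mul_eq_mul_spanSeminorm hpq hβ.le fun s => V s - μ s
  refine ⟨μ, hμ, ?_⟩
  calc v ≤ ∑ s, (P₀ s + -y s) * V s + ∑ s, μ s * -(P₀ s + -y s) :=
        hμv (-y) ⟨by simp [hy], by rwa [lpNorm_neg]⟩
    _ = ∑ s, P₀ s * (V s - μ s) - ∑ s, y s * (V s - μ s) := by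
        simp only [← sum_add_distrib, ← sum_sub_distrib]
        exact sum_congr rfl fun s _ => by ring
    _ = _ := by rw [hyw]

end Duality

lemma csInf_eq_csSup_of_forall_le {α : Type*} [ConditionallyCompleteLattice α] {A B : Set α}
    (hA : A.Nonempty) (hB : B.Nonempty) (hBA : ∀ a ∈ A, ∀ b ∈ B, b ≤ a)
    (hAB : ∀ v ∈ lowerBounds A, ∃ b ∈ B, v ≤ b) : sInf A = sSup B := by
  obtain ⟨a₀, ha₀⟩ := hA
  obtain ⟨b₀, hb₀⟩ := hB
  have hA_bdd : BddBelow A := ⟨b₀, fun a ha => hBA a ha b₀ hb₀⟩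
  have hB_bdd : BddAbove B := ⟨a₀, fun b hb => hBA a₀ ha₀ b hb⟩
  obtain ⟨b, hb, hAb⟩ := hAB (sInf A) fun a ha => csInf_le hA_bdd ha
  exact (hAb.trans (le_csSup hB_bdd hb)).antisymm
    (csSup_le ⟨b₀, hb₀⟩ fun b hb => le_csInf ⟨a₀, ha₀⟩ fun a ha => hBA a ha b hb)

theorem sa_rectangular_duality_general {S : Type*} [Fintype S] [Nonempty S]
    (p q : ℝ) (hp : 1 < p) (hpq : 1 / p + 1 / q = 1)
    (P₀ : S → ℝ) (hP₀pos : ∀ s, 0 ≤ P₀ s) (hP₀sum : ∑ s, P₀ s = 1)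
    (β : ℝ) (hβ : 0 ≤ β) (V : S → ℝ) :
    sInf {x : ℝ | ∃ y : S → ℝ, (∑ s, y s = 0) ∧ (∀ s, 0 ≤ P₀ s + y s) ∧
        lpNorm p y ≤ β ∧ x = ∑ s, (P₀ s + y s) * V s}
      = sSup {x : ℝ | ∃ μ : S → ℝ, (∀ s, 0 ≤ μ s) ∧
        x = (∑ s, P₀ s * (V s - μ s)) - β * spanSeminorm q (fun s => V s - μ s)} := by
  have hpq : p.HolderConjugate q :=
    Real.holderConjugate_iff.2 ⟨hp, by simpa only [one_div] using hpq⟩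
  refine csInf_eq_csSup_of_forall_le
    ⟨_, 0, by simp, by simpa using hP₀pos, by rwa [lpNorm_zero hpq.ne_zero], rfl⟩
    ⟨_, 0, fun _ => le_rfl, rfl⟩ ?_ ?_
  · rintro _ ⟨y, hy, hPy, hyβ, rfl⟩ _ ⟨μ, hμ, rfl⟩
    exact dual_value_le_primal_value hpq hy hPy hyβ hμ
  · intro v hv
    obtain ⟨μ, hμ, hvμ⟩ := exists_dual_value_ge hpq hP₀pos hP₀sum hβ
      fun y hy hPy hyβ => hv ⟨y, hy, hPy, hyβ, rfl⟩
    exact ⟨_, ⟨μ, hμ, rfl⟩, hvμ⟩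

/-- duality for the inner minimization over the `sa`-rectangular `L_p`
uncertainty set constrained to the simplex:
`min_{y ∈ P} ⟨P₀ + y, V⟩ = max_{μ ≥ 0} (⟨P₀, V - μ⟩ - β·sp_q(V - μ))`. -/
theorem sa_rectangular_duality {S : Type*} [Fintype S] [Nonempty S]
    (p q : ℝ) (hp : 1 < p) (hq : 1 < q) (hpq : 1 / p + 1 / q = 1)
    (P₀ : S → ℝ) (hP₀pos : ∀ s, 0 ≤ P₀ s) (hP₀sum : ∑ s, P₀ s = 1)
    (β : ℝ) (hβ : 0 ≤ β) (V : S → ℝ) :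
    sInf {x : ℝ | ∃ y : S → ℝ, (∑ s, y s = 0) ∧ (∀ s, 0 ≤ P₀ s + y s) ∧
        lpNorm p y ≤ β ∧ x = ∑ s, (P₀ s + y s) * V s}
      = sSup {x : ℝ | ∃ μ : S → ℝ, (∀ s, 0 ≤ μ s) ∧
        x = (∑ s, P₀ s * (V s - μ s)) - β * spanSeminorm q (fun s => V s - μ s)} :=
  sa_rectangular_duality_general p q hp hpq P₀ hP₀pos hP₀sum β hβ V
end

section
/- Let M be a discounted MDP with finite state space S, finite action space A, transition kernel P, rewards in [0,1], and discount γ ∈ [0,1). Let M̂ be identical except with transition kernel P̂. Let Q* and Q̂* be the optimal Q-functions of M and M̂, and V*, V̂* the optimal value functions. If for every state-action pair (s,a), |⟨P(·|s,a) − P̂(·|s,a), V*⟩| ≤ ε, then ‖Q* − Q̂*‖_∞ ≤ γ ε / (1 − γ). -/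
/-!
Write `D = ‖Q* − Q̂*‖_∞` (sup norm on `S → A → ℝ`). Subtracting the two Bellman equations,
`Q* − Q̂* = γ (⟨P − P̂, V*⟩ + ⟨P̂, V* − V̂*⟩)`; the first term is at most `ε` by hypothesis and the
second at most `‖V* − V̂*‖_∞ ≤ D`, since `P̂(·|s,a)` is a probability vector and `max` is
1-Lipschitz for the sup norm. Hence `D ≤ γ (ε + D)`, i.e. `D ≤ γ ε / (1 − γ)`.
-/

open Finset

lemma abs_ciSup_sub_ciSup_le {ι : Type*} [Fintype ι] (f g : ι → ℝ) :
    |(⨆ i, f i) - ⨆ i, g i| ≤ ‖f - g‖ := by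
  rcases isEmpty_or_nonempty ι with _ | _
  · simp
  have hsup (u v : ι → ℝ) : (⨆ i, u i) - ⨆ i, v i ≤ ‖u - v‖ := by
    rw [sub_le_iff_le_add']
    refine ciSup_le fun i => ?_
    calc u i = v i + (u - v) i := by simp
      _ ≤ (⨆ i, v i) + ‖u - v‖ :=
        add_le_add (le_ciSup (Finite.bddAbove_range v) i)
          ((Real.le_norm_self _).trans (norm_le_pi_norm (u - v) i))
  rw [abs_sub_le_iff]
  exact ⟨hsup f g, norm_sub_rev f g ▸ hsup g f⟩

lemma norm_iSup_sub_iSup_le {S A : Type*} [Fintype S] [Fintype A] (Q Q' : S → A → ℝ) :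
    ‖(fun s => ⨆ a, Q s a) - fun s => ⨆ a, Q' s a‖ ≤ ‖Q - Q'‖ :=
  (pi_norm_le_iff_of_nonneg (norm_nonneg _)).2 fun s =>
    (abs_ciSup_sub_ciSup_le (Q s) (Q' s)).trans (norm_le_pi_norm (Q - Q') s)

lemma abs_sum_mul_le_norm {ι : Type*} [Fintype ι] {p : ι → ℝ} (hp : ∀ i, 0 ≤ p i)
    (hp1 : ∑ i, p i = 1) (v : ι → ℝ) : |∑ i, p i * v i| ≤ ‖v‖ :=
  calc |∑ i, p i * v i| ≤ ∑ i, p i * ‖v‖ := by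
        refine (abs_sum_le_sum_abs _ _).trans (sum_le_sum fun i _ => ?_)
        rw [abs_mul, abs_of_nonneg (hp i)]
        exact mul_le_mul_of_nonneg_left (norm_le_pi_norm v i) (hp i)
    _ = ‖v‖ := by rw [← sum_mul, hp1, one_mul]

theorem optimal_Q_perturbation_general {S A : Type*} [Fintype S] [Fintype A]
    (P Phat : S → A → S → ℝ) (r : S → A → ℝ) (γ ε : ℝ)
    (hγ0 : 0 ≤ γ) (hγ1 : γ < 1) (hε : 0 ≤ ε)
    (hPhat : ∀ s a, (∀ s', 0 ≤ Phat s a s') ∧ ∑ s', Phat s a s' = 1)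
    (Qstar Qhat : S → A → ℝ)
    (hQstar : ∀ s a, Qstar s a = r s a + γ * ∑ s', P s a s' * (⨆ a', Qstar s' a'))
    (hQhat : ∀ s a, Qhat s a = r s a + γ * ∑ s', Phat s a s' * (⨆ a', Qhat s' a'))
    (hclose : ∀ s a, |∑ s', (P s a s' - Phat s a s') * (⨆ a', Qstar s' a')| ≤ ε) :
    ∀ s a, |Qstar s a - Qhat s a| ≤ γ * ε / (1 - γ) := by
  set D := ‖Qstar - Qhat‖
  have hstep (s : S) (a : A) : |Qstar s a - Qhat s a| ≤ γ * (ε + D) := by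
    have hsplit : Qstar s a - Qhat s a =
        γ * (∑ s', (P s a s' - Phat s a s') * (⨆ a', Qstar s' a') +
          ∑ s', Phat s a s' * ((⨆ a', Qstar s' a') - ⨆ a', Qhat s' a')) := by
      rw [hQstar s a, hQhat s a]
      simp only [sub_mul, mul_sub, sum_sub_distrib]
      ring
    rw [hsplit, abs_mul, abs_of_nonneg hγ0]
    gcongr
    exact (abs_add_le _ _).trans <| add_le_add (hclose s a) <|
      (abs_sum_mul_le_norm (hPhat s a).1 (hPhat s a).2 _).trans
        (norm_iSup_sub_iSup_le Qstar Qhat)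
  have hnonneg : 0 ≤ γ * (ε + D) := mul_nonneg hγ0 (add_nonneg hε (norm_nonneg _))
  have hD : D ≤ γ * (ε + D) := (pi_norm_le_iff_of_nonneg hnonneg).2 fun s =>
    (pi_norm_le_iff_of_nonneg hnonneg).2 (hstep s)
  have hDbound : D ≤ γ * ε / (1 - γ) := by
    rw [le_div_iff₀ (sub_pos.2 hγ1)]
    linarith
  exact fun s a => ((norm_le_pi_norm (Qstar s - Qhat s) a).trans
    (norm_le_pi_norm (Qstar - Qhat) s)).trans hDbound

/-- if the optimal value function `V*` of an MDP satisfies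
`|⟨P(·|s,a) − P̂(·|s,a), V*⟩| ≤ ε` for all `(s,a)`, then the optimal Q-functions of the
two MDPs (same rewards in `[0,1]`, discount `γ`) satisfy `‖Q* − Q̂*‖_∞ ≤ γε/(1−γ)`. -/
theorem optimal_Q_perturbation {S A : Type*} [Fintype S] [Fintype A] [Nonempty S] [Nonempty A]
    (P Phat : S → A → S → ℝ) (r : S → A → ℝ) (γ ε : ℝ)
    (hγ0 : 0 ≤ γ) (hγ1 : γ < 1) (hε : 0 ≤ ε)
    (hP : ∀ s a, (∀ s', 0 ≤ P s a s') ∧ ∑ s', P s a s' = 1)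
    (hPhat : ∀ s a, (∀ s', 0 ≤ Phat s a s') ∧ ∑ s', Phat s a s' = 1)
    (hr : ∀ s a, 0 ≤ r s a ∧ r s a ≤ 1)
    (Qstar Qhat : S → A → ℝ)
    (hQstar : ∀ s a, Qstar s a = r s a + γ * ∑ s', P s a s' * (⨆ a', Qstar s' a'))
    (hQhat : ∀ s a, Qhat s a = r s a + γ * ∑ s', Phat s a s' * (⨆ a', Qhat s' a'))
    (hclose : ∀ s a, |∑ s', (P s a s' - Phat s a s') * (⨆ a', Qstar s' a')| ≤ ε) :
    ∀ s a, |Qstar s a - Qhat s a| ≤ γ * ε / (1 - γ) :=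
  optimal_Q_perturbation_general P Phat r γ ε hγ0 hγ1 hε hPhat Qstar Qhat hQstar hQhat hclose
end

section
/- Let M be a discounted MDP with finite state space S, discount γ ∈ [0,1), and rewards in [0,1], and let π be any stationary policy with state-action transition matrix P^π and value function V^π (so 0 ≤ V^π(s) ≤ 1/(1−γ)). Define Var_P(V^π)(s,a) := Var_{s' ~ P(·|s,a)}(V^π(s')). Then ‖(I − γP^π)^{-1} √(Var_P(V^π))‖_∞ ≤ √(2/(1−γ)^3), where the square root is taken componentwise. -/
/-!
On `S × A` the action values `Q = r + γ P V` solve `Q = r + γ P^π Q`. The function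
`H = Q / (1 - γ) - Q² + C` (a bound on the variance of the discounted return, shifted by a
constant) satisfies `γ P^π H + Var(Q) ≤ H`, and `Var_P(V) ≤ Var(Q)` by Jensen over the action.
Jensen for `√` and Cauchy–Schwarz then make `G = √(H / (1 - γ))` a supersolution,
`√Var_P(V) + γ P^π G ≤ G`, so the maximum principle for `I - γ P^π` gives
`0 ≤ u ≤ G ≤ √(2 / (1 - γ)³)`.
-/

open Matrix Finset

lemma sqrt_add_sqrt_mul_le {a b c : ℝ} (ha : 0 ≤ a) (hb : 0 ≤ b) (hc : 0 ≤ c) :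
    √a + √(c * b) ≤ √((1 + c) * (a + b)) := by
  rw [Real.le_sqrt (by positivity) (by positivity), Real.sqrt_mul hc]
  nlinarith [sq_nonneg (√c * √a - √b), Real.sq_sqrt ha, Real.sq_sqrt hb, Real.sq_sqrt hc]

lemma one_sub_mul_sq_le {γ q : ℝ} (hγ1 : γ < 1) (hq0 : 0 ≤ q) (hq1 : q ≤ 1 / (1 - γ)) :
    (1 - γ) * q ^ 2 ≤ q := by
  have h1γ : 0 < 1 - γ := by linarith
  have : (1 - γ) * q ≤ 1 := by rwa [le_div_iff₀ h1γ, mul_comm] at hq1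
  nlinarith

section

variable {T : Type*}

/-- `Q / (1 - γ) - Q ^ 2` bounds the variance of a return in `[0, 1 / (1 - γ)]` with mean `Q`;
the constant is what makes `totalVarianceBound_step_scalar` hold (it completes a square). -/
noncomputable def totalVarianceBound (γ : ℝ) (Q : T → ℝ) : T → ℝ :=
  fun t => Q t / (1 - γ) - Q t ^ 2 + 1 / (4 * (1 - γ ^ 2) * (1 - γ))

lemma totalVarianceBound_step_scalar {γ r m S2 : ℝ} (hγ0 : 0 ≤ γ) (hγ1 : γ < 1) (hr0 : 0 ≤ r)
    (hr1 : r ≤ 1) (hS2 : (1 - γ) * S2 ≤ m) :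
    γ * (m / (1 - γ) - S2 + 1 / (4 * (1 - γ ^ 2) * (1 - γ))) + (S2 - m ^ 2) ≤
      (r + γ * m) / (1 - γ) - (r + γ * m) ^ 2 + 1 / (4 * (1 - γ ^ 2) * (1 - γ)) := by
  have h1γ : 0 < 1 - γ := by linarith
  have h1γ2 : 0 < 1 - γ ^ 2 := by nlinarith
  have hsquare : 4 * (1 - γ ^ 2) * (m - m ^ 2 + (r + γ * m) ^ 2) - 4 * r * (1 + γ) - 1 ≤ 0 := by
    nlinarith [sq_nonneg (1 + 2 * γ * r - 2 * (1 - γ ^ 2) * m), mul_nonneg hr0 (sub_nonneg.2 hr1)]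
  rw [← sub_nonpos]
  calc _ = ((1 - γ) * S2 - m) +
        (4 * (1 - γ ^ 2) * (m - m ^ 2 + (r + γ * m) ^ 2) - 4 * r * (1 + γ) - 1) /
          (4 * (1 - γ ^ 2)) := by
        field_simp
        ring
    _ ≤ 0 := add_nonpos (by linarith) (div_nonpos_of_nonpos_of_nonneg hsquare (by positivity))

variable {γ : ℝ} {Q : T → ℝ}

lemma totalVarianceBound_nonneg (hγ0 : 0 ≤ γ) (hγ1 : γ < 1) (hQ0 : 0 ≤ Q)
    (hQ1 : Q ≤ fun _ => 1 / (1 - γ)) : 0 ≤ totalVarianceBound γ Q := by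
  intro t
  have h1γ : 0 < 1 - γ := by linarith
  have h1γ2 : 0 < 1 - γ ^ 2 := by nlinarith
  have hsq : Q t ^ 2 ≤ Q t / (1 - γ) := by
    rw [le_div_iff₀ h1γ, mul_comm]; exact one_sub_mul_sq_le hγ1 (hQ0 t) (hQ1 t)
  have hC : 0 < 1 / (4 * (1 - γ ^ 2) * (1 - γ)) := by positivity
  simp only [totalVarianceBound, Pi.zero_apply]
  linarith

lemma totalVarianceBound_le (hγ0 : 0 ≤ γ) (hγ1 : γ < 1) (hQ1 : Q ≤ fun _ => 1 / (1 - γ)) :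
    totalVarianceBound γ Q ≤ fun _ => 2 / (1 - γ) ^ 2 := by
  intro t
  have h1γ : 0 < 1 - γ := by linarith
  have hQ : Q t / (1 - γ) ≤ 1 / (1 - γ) ^ 2 := by
    rw [sq, ← div_div]; exact div_le_div_of_nonneg_right (hQ1 t) h1γ.le
  have hC : 1 / (4 * (1 - γ ^ 2) * (1 - γ)) ≤ 1 / (1 - γ) ^ 2 := by
    apply one_div_le_one_div_of_le (by positivity); nlinarith
  have h2 : 2 / (1 - γ) ^ 2 = 1 / (1 - γ) ^ 2 + 1 / (1 - γ) ^ 2 := by ring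
  simp only [totalVarianceBound]
  linarith [sq_nonneg (Q t)]

variable [Fintype T]

def rowVariance (K : Matrix T T ℝ) (f : T → ℝ) : T → ℝ := K *ᵥ f ^ 2 - (K *ᵥ f) ^ 2

variable [DecidableEq T] {K : Matrix T T ℝ}

lemma mulVec_mono_of_mem_rowStochastic (hK : K ∈ rowStochastic ℝ T) {f g : T → ℝ}
    (hfg : f ≤ g) : K *ᵥ f ≤ K *ᵥ g := by
  have := nonneg_mulVec_of_mem_rowStochastic hK (x := g - f) fun t => sub_nonneg.2 (hfg t)
  intro t
  simpa [mulVec_sub] using this t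

lemma mulVec_const_of_mem_rowStochastic (hK : K ∈ rowStochastic ℝ T) (c : ℝ) :
    K *ᵥ (fun _ => c) = fun _ => c := by
  have : (fun _ => c : T → ℝ) = c • 1 := by ext; simp
  rw [this, mulVec_smul, one_vecMul_of_mem_rowStochastic hK]

lemma sq_mulVec_le_mulVec_sq (hK : K ∈ rowStochastic ℝ T) (f : T → ℝ) (t : T) :
    (K *ᵥ f) t ^ 2 ≤ (K *ᵥ f ^ 2) t := by
  simpa [mulVec, dotProduct] using
    (even_two.convexOn_pow (𝕜 := ℝ)).map_sum_le (t := univ) (w := K t) (p := f)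
      (fun _ _ => nonneg_of_mem_rowStochastic hK) (sum_row_of_mem_rowStochastic hK t)
      (by simp)

lemma rowVariance_nonneg (hK : K ∈ rowStochastic ℝ T) (f : T → ℝ) : 0 ≤ rowVariance K f :=
  fun t => by simpa [rowVariance] using sq_mulVec_le_mulVec_sq hK f t

lemma mulVec_sqrt_le_sqrt_mulVec (hK : K ∈ rowStochastic ℝ T) {f : T → ℝ} (hf : 0 ≤ f)
    (t : T) : (K *ᵥ fun s => √(f s)) t ≤ √((K *ᵥ f) t) := by
  simpa [mulVec, dotProduct] using
    Real.strictConcaveOn_sqrt.concaveOn.le_map_sum (t := univ) (w := K t) (p := f)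
      (fun _ _ => nonneg_of_mem_rowStochastic hK) (sum_row_of_mem_rowStochastic hK t)
      (fun s _ => hf s)

/-- Maximum principle for `I - γK`: look at a point where `f - g` is maximal. -/
lemma le_of_sub_smul_mulVec_le (hK : K ∈ rowStochastic ℝ T) {γ : ℝ} (hγ0 : 0 ≤ γ)
    (hγ1 : γ < 1) {f g : T → ℝ} (h : f - γ • (K *ᵥ f) ≤ g - γ • (K *ᵥ g)) : f ≤ g := by
  intro t
  by_contra! hlt
  have : Nonempty T := ⟨t⟩
  obtain ⟨t₀, ht₀⟩ := Finite.exists_max (f - g)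
  have hpos : 0 < (f - g) t₀ := (sub_pos.2 hlt).trans_le (ht₀ t)
  have hK_le : (K *ᵥ (f - g)) t₀ ≤ (f - g) t₀ := by
    simpa [mulVec_const_of_mem_rowStochastic hK] using
      mulVec_mono_of_mem_rowStochastic hK (g := fun _ => (f - g) t₀) ht₀ t₀
  have := h t₀
  simp only [Pi.sub_apply, Pi.smul_apply, smul_eq_mul, mulVec_sub] at this hK_le hpos
  nlinarith

lemma nonneg_of_eq_add_smul_mulVec (hK : K ∈ rowStochastic ℝ T) {γ : ℝ} (hγ0 : 0 ≤ γ)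
    (hγ1 : γ < 1) {σ u : T → ℝ} (hσ : 0 ≤ σ) (hu : u = σ + γ • (K *ᵥ u)) : 0 ≤ u := by
  refine le_of_sub_smul_mulVec_le hK hγ0 hγ1 fun t => ?_
  have := congrFun hu t
  simp only [Pi.add_apply, Pi.smul_apply, smul_eq_mul] at this
  simpa [this] using hσ t

lemma le_div_of_eq_add_smul_mulVec (hK : K ∈ rowStochastic ℝ T) {γ : ℝ} (hγ0 : 0 ≤ γ)
    (hγ1 : γ < 1) {σ u : T → ℝ} {c : ℝ} (hσ : σ ≤ fun _ => c) (hu : u = σ + γ • (K *ᵥ u)) :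
    u ≤ fun _ => c / (1 - γ) := by
  refine le_of_sub_smul_mulVec_le hK hγ0 hγ1 fun t => ?_
  have := congrFun hu t
  simp only [Pi.add_apply, Pi.smul_apply, smul_eq_mul] at this
  have h1γ : 1 - γ ≠ 0 := by linarith
  simp only [Pi.sub_apply, Pi.smul_apply, smul_eq_mul, mulVec_const_of_mem_rowStochastic hK]
  rw [show c / (1 - γ) - γ * (c / (1 - γ)) = c by field_simp]
  linarith [hσ t]

lemma totalVarianceBound_step (hK : K ∈ rowStochastic ℝ T) (hγ0 : 0 ≤ γ) (hγ1 : γ < 1)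
    {r : T → ℝ} (hr0 : 0 ≤ r) (hr1 : r ≤ 1) (hQ : Q = r + γ • (K *ᵥ Q)) :
    γ • (K *ᵥ totalVarianceBound γ Q) + rowVariance K Q ≤ totalVarianceBound γ Q := by
  have hQ1 := le_div_of_eq_add_smul_mulVec hK hγ0 hγ1 (c := 1) hr1 hQ
  have hQ0 := nonneg_of_eq_add_smul_mulVec hK hγ0 hγ1 hr0 hQ
  set C := 1 / (4 * (1 - γ ^ 2) * (1 - γ))
  have hH : totalVarianceBound γ Q = (1 - γ)⁻¹ • Q - Q ^ 2 + fun _ => C := by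
    ext t; simp [totalVarianceBound, div_eq_inv_mul, C]
  have hS2 : (1 - γ) • (K *ᵥ Q ^ 2) ≤ K *ᵥ Q := by
    rw [← mulVec_smul]
    exact mulVec_mono_of_mem_rowStochastic hK fun t =>
      one_sub_mul_sq_le hγ1 (hQ0 t) (hQ1 t)
  intro t
  have hQt := congrFun hQ t
  simp only [Pi.add_apply, Pi.smul_apply, smul_eq_mul] at hQt
  have := totalVarianceBound_step_scalar hγ0 hγ1 (hr0 t) (hr1 t) (hS2 t)
  rw [hH]
  simp only [mulVec_add, mulVec_sub, mulVec_smul, mulVec_const_of_mem_rowStochastic hK,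
    rowVariance, Pi.add_apply, Pi.sub_apply, Pi.smul_apply, smul_eq_mul, Pi.pow_apply] at this ⊢
  rw [hQt]
  convert this using 2 <;> ring

lemma add_smul_mulVec_sqrt_totalVarianceBound_le (hK : K ∈ rowStochastic ℝ T) (hγ0 : 0 ≤ γ)
    (hγ1 : γ < 1) {r : T → ℝ} (hr0 : 0 ≤ r) (hr1 : r ≤ 1) (hQ : Q = r + γ • (K *ᵥ Q))
    {σ : T → ℝ} (hσ : ∀ t, σ t ≤ √(rowVariance K Q t)) :
    σ + γ • (K *ᵥ fun t => √(totalVarianceBound γ Q t / (1 - γ))) ≤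
      fun t => √(totalVarianceBound γ Q t / (1 - γ)) := by
  intro t
  set H := totalVarianceBound γ Q
  set V := rowVariance K Q
  have h1γ : 0 < 1 - γ := by linarith
  have hH0 : 0 ≤ H := totalVarianceBound_nonneg hγ0 hγ1
    (nonneg_of_eq_add_smul_mulVec hK hγ0 hγ1 hr0 hQ)
    (le_div_of_eq_add_smul_mulVec hK hγ0 hγ1 (c := 1) hr1 hQ)
  have hKH0 : 0 ≤ γ * (K *ᵥ H) t := mul_nonneg hγ0 (nonneg_mulVec_of_mem_rowStochastic hK hH0 t)
  have hstep := totalVarianceBound_step hK hγ0 hγ1 hr0 hr1 hQ t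
  simp only [Pi.add_apply, Pi.smul_apply, smul_eq_mul] at hstep ⊢
  have hV0 : 0 ≤ V t := rowVariance_nonneg hK Q t
  have hJensen : (K *ᵥ fun s => √(H s / (1 - γ))) t ≤ √((K *ᵥ H) t / (1 - γ)) := by
    have hdiv : (K *ᵥ fun s => H s / (1 - γ)) t = (K *ᵥ H) t / (1 - γ) := by
      simp only [mulVec, dotProduct, sum_div, mul_div_assoc]
    rw [← hdiv]
    exact mulVec_sqrt_le_sqrt_mulVec hK (fun s => div_nonneg (hH0 s) h1γ.le) t
  calc σ t + γ * (K *ᵥ fun s => √(H s / (1 - γ))) t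
      ≤ √(V t) + γ * √((K *ᵥ H) t / (1 - γ)) := by gcongr; exact hσ t
    _ = √(V t) + √(γ / (1 - γ) * (γ * (K *ᵥ H) t)) := by
        rw [show γ / (1 - γ) * (γ * (K *ᵥ H) t) = γ ^ 2 * ((K *ᵥ H) t / (1 - γ)) by ring,
          Real.sqrt_mul (sq_nonneg γ), Real.sqrt_sq hγ0]
    _ ≤ √(V t) + √(γ / (1 - γ) * (H t - V t)) := by gcongr; linarith
    _ ≤ √((1 + γ / (1 - γ)) * (V t + (H t - V t))) :=
        sqrt_add_sqrt_mul_le hV0 (by linarith) (by positivity)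
    _ = √(H t / (1 - γ)) := by congr 1; field_simp; ring

theorem abs_le_of_le_sqrt_rowVariance (hK : K ∈ rowStochastic ℝ T) (hγ0 : 0 ≤ γ)
    (hγ1 : γ < 1) {r : T → ℝ} (hr0 : 0 ≤ r) (hr1 : r ≤ 1) (hQ : Q = r + γ • (K *ᵥ Q))
    {σ u : T → ℝ} (hσ0 : 0 ≤ σ) (hσ : ∀ t, σ t ≤ √(rowVariance K Q t)) (hu : u = σ + γ • (K *ᵥ u))
    (t : T) : |u t| ≤ √(2 / (1 - γ) ^ 3) := by
  have hu0 := nonneg_of_eq_add_smul_mulVec hK hγ0 hγ1 hσ0 hu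
  have huG : u ≤ fun t => √(totalVarianceBound γ Q t / (1 - γ)) := by
    refine le_of_sub_smul_mulVec_le hK hγ0 hγ1 fun s => ?_
    have := add_smul_mulVec_sqrt_totalVarianceBound_le hK hγ0 hγ1 hr0 hr1 hQ hσ s
    have hus := congrFun hu s
    simp only [Pi.add_apply, Pi.sub_apply, Pi.smul_apply, smul_eq_mul] at this hus ⊢
    linarith
  have hH := totalVarianceBound_le hγ0 hγ1 (le_div_of_eq_add_smul_mulVec hK hγ0 hγ1 (c := 1) hr1 hQ)
  rw [abs_of_nonneg (hu0 t)]
  refine (huG t).trans (Real.sqrt_le_sqrt ?_)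
  calc totalVarianceBound γ Q t / (1 - γ) ≤ 2 / (1 - γ) ^ 2 / (1 - γ) := by gcongr; exact hH t
    _ = 2 / (1 - γ) ^ 3 := by rw [div_div, ← pow_succ]

end

section

variable {S A : Type*} [Fintype S] [Fintype A]

def stateActionMatrix (P : S → A → S → ℝ) (π : S → A → ℝ) : Matrix (S × A) (S × A) ℝ :=
  of fun x y => P x.1 x.2 y.1 * π y.1 y.2

lemma stateActionMatrix_mulVec (P : S → A → S → ℝ) (π : S → A → ℝ) (f : S × A → ℝ) (s : S)
    (a : A) :
    (stateActionMatrix P π *ᵥ f) (s, a) = ∑ s', P s a s' * ∑ a', π s' a' * f (s', a') := by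
  simp [stateActionMatrix, mulVec, dotProduct, Fintype.sum_prod_type, mul_sum, mul_assoc]

variable {P : S → A → S → ℝ} {π : S → A → ℝ}

lemma stateActionMatrix_mem_rowStochastic [DecidableEq S] [DecidableEq A]
    (hP : ∀ s a, (∀ s', 0 ≤ P s a s') ∧ ∑ s', P s a s' = 1)
    (hπ : ∀ s, (∀ a, 0 ≤ π s a) ∧ ∑ a, π s a = 1) :
    stateActionMatrix P π ∈ rowStochastic ℝ (S × A) := by
  refine mem_rowStochastic_iff_sum.2 ⟨fun x y => mul_nonneg ((hP _ _).1 _) ((hπ _).1 _), ?_⟩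
  rintro ⟨s, a⟩
  simp [stateActionMatrix, Fintype.sum_prod_type, ← mul_sum, (hπ _).2, (hP _ _).2]

/-- Conditioning on the next state can only decrease the variance. -/
lemma variance_le_rowVariance_stateActionMatrix (hP : ∀ s a s', 0 ≤ P s a s')
    (hπ : ∀ s, (∀ a, 0 ≤ π s a) ∧ ∑ a, π s a = 1) {V : S → ℝ} {Q : S × A → ℝ}
    (hV : ∀ s, V s = ∑ a, π s a * Q (s, a)) (s : S) (a : A) :
    ∑ s', P s a s' * V s' ^ 2 - (∑ s', P s a s' * V s') ^ 2 ≤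
      rowVariance (stateActionMatrix P π) Q (s, a) := by
  have hJensen (s' : S) : V s' ^ 2 ≤ ∑ a', π s' a' * Q (s', a') ^ 2 := by
    simpa [hV] using (even_two.convexOn_pow (𝕜 := ℝ)).map_sum_le (t := univ) (w := π s')
      (p := fun a' => Q (s', a')) (fun _ _ => (hπ s').1 _) (hπ s').2 (by simp)
  simp only [rowVariance, Pi.sub_apply, Pi.pow_apply, stateActionMatrix_mulVec, ← hV]
  gcongr with s'
  · exact hP s a s'
  · exact hJensen s'

end

theorem total_variance_lemma_general {S A : Type*} [Fintype S] [Fintype A]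
    (P : S → A → S → ℝ) (π : S → A → ℝ) (r : S → A → ℝ)
    (γ : ℝ) (hγ0 : 0 ≤ γ) (hγ1 : γ < 1)
    (hP : ∀ s a, (∀ s', 0 ≤ P s a s') ∧ ∑ s', P s a s' = 1)
    (hπ : ∀ s, (∀ a, 0 ≤ π s a) ∧ ∑ a, π s a = 1)
    (hr : ∀ s a, 0 ≤ r s a ∧ r s a ≤ 1)
    (V : S → ℝ)
    (hV : ∀ s, V s = ∑ a, π s a * (r s a + γ * ∑ s', P s a s' * V s'))
    (u : S → A → ℝ)
    (hu : ∀ s a, u s a =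
        Real.sqrt ((∑ s', P s a s' * (V s') ^ 2) - (∑ s', P s a s' * V s') ^ 2)
          + γ * ∑ s', P s a s' * ∑ a', π s' a' * u s' a') :
    ∀ s a, |u s a| ≤ Real.sqrt (2 / (1 - γ) ^ 3) := by
  classical
  set K := stateActionMatrix P π
  have hK : K ∈ rowStochastic ℝ (S × A) := stateActionMatrix_mem_rowStochastic hP hπ
  set Q : S × A → ℝ := fun x => r x.1 x.2 + γ * ∑ s', P x.1 x.2 s' * V s'
  have hVQ : ∀ s, V s = ∑ a, π s a * Q (s, a) := hV
  have hQ : Q = (fun x => r x.1 x.2) + γ • (K *ᵥ Q) := by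
    ext ⟨s, a⟩
    simp only [K, stateActionMatrix_mulVec, ← hVQ, Pi.add_apply, Pi.smul_apply, smul_eq_mul, Q]
  set σ : S × A → ℝ := fun x =>
    √(∑ s', P x.1 x.2 s' * V s' ^ 2 - (∑ s', P x.1 x.2 s' * V s') ^ 2)
  have hσ (x : S × A) : σ x ≤ √(rowVariance K Q x) := Real.sqrt_le_sqrt <|
    variance_le_rowVariance_stateActionMatrix (fun s a => (hP s a).1) hπ hVQ x.1 x.2
  have hu' : (fun x => u x.1 x.2) = σ + γ • (K *ᵥ fun x => u x.1 x.2) := by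
    ext ⟨s, a⟩
    simp only [K, stateActionMatrix_mulVec, Pi.add_apply, Pi.smul_apply, smul_eq_mul, σ, hu s a]
  intro s a
  exact abs_le_of_le_sqrt_rowVariance hK hγ0 hγ1 (fun x => (hr x.1 x.2).1) (fun x => (hr x.1 x.2).2)
    hQ (fun _ => Real.sqrt_nonneg _) hσ hu' (s, a)

/-- total variance lemma: for a stationary policy `π` in a finite discounted
MDP with rewards in `[0,1]`, the vector `u = (I − γP^π)^{-1} √(Var_P(V^π))` (encoded as the
unique solution of `u = √(Var_P(V^π)) + γ P^π u`) satisfies `‖u‖_∞ ≤ √(2/(1−γ)³)`. -/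
theorem total_variance_lemma {S A : Type*} [Fintype S] [Fintype A] [Nonempty S] [Nonempty A]
    (P : S → A → S → ℝ) (π : S → A → ℝ) (r : S → A → ℝ)
    (γ : ℝ) (hγ0 : 0 ≤ γ) (hγ1 : γ < 1)
    (hP : ∀ s a, (∀ s', 0 ≤ P s a s') ∧ ∑ s', P s a s' = 1)
    (hπ : ∀ s, (∀ a, 0 ≤ π s a) ∧ ∑ a, π s a = 1)
    (hr : ∀ s a, 0 ≤ r s a ∧ r s a ≤ 1)
    (V : S → ℝ)
    (hV : ∀ s, V s = ∑ a, π s a * (r s a + γ * ∑ s', P s a s' * V s'))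
    (u : S → A → ℝ)
    (hu : ∀ s a, u s a =
        Real.sqrt ((∑ s', P s a s' * (V s') ^ 2) - (∑ s', P s a s' * V s') ^ 2)
          + γ * ∑ s', P s a s' * ∑ a', π s' a' * u s' a') :
    ∀ s a, |u s a| ≤ Real.sqrt (2 / (1 - γ) ^ 3) :=
  total_variance_lemma_general P π r γ hγ0 hγ1 hP hπ hr V hV u hu
end

section
/- Let M be a finite discounted MDP with rewards in [0,1] and discount γ ∈ [0,1). For a state s and scalars u, u', let M_{s,u} be the MDP identical to M except that state s is absorbing with per-step reward (1−γ)u. Then for every stationary policy π, ‖Q^π_{M_{s,u}} − Q^π_{M_{s,u'}}‖_∞ ≤ |u − u'|. -/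
/-!
The difference `D = Q_u - Q_{u'}` solves the policy-evaluation equation of the same kernel with
reward difference `R_u - R_{u'}`, which vanishes off `s₀` and equals `(1 - γ)(u - u')` on it.
One step of policy evaluation averages with probability weights and so does not increase the sup
norm; hence `‖D‖ ≤ ‖R_u - R_{u'}‖ + γ ‖D‖`, i.e. `‖D‖ ≤ ‖R_u - R_{u'}‖ / (1 - γ) ≤ |u - u'|`.
-/

open Finset

theorem norm_sum_smul_le_of_sum_eq_one {ι E : Type*} [Fintype ι] [SeminormedAddCommGroup E]
    [NormedSpace ℝ E] {w : ι → ℝ} {f : ι → E} {C : ℝ} (hw : ∀ i, 0 ≤ w i)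
    (hsum : ∑ i, w i = 1) (hf : ∀ i, ‖f i‖ ≤ C) : ‖∑ i, w i • f i‖ ≤ C := by
  simpa using (convex_closedBall (0 : E) C).sum_mem (fun i _ => hw i) hsum
    (fun i _ => mem_closedBall_zero_iff.2 (hf i))

section PolicyEvaluation

variable {S A : Type*} [Fintype S] [Fintype A]

/-- `nextValue W π Q s a` is the expected value of `Q` at the next state-action pair, when the
next state is drawn from `W s a` and the next action from `π`. -/
def nextValue (W : S → A → S → ℝ) (π : S → A → ℝ) (Q : S → A → ℝ) (s : S) (a : A) : ℝ :=
  ∑ s', W s a s' * ∑ a', π s' a' * Q s' a'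

theorem nextValue_sub (W : S → A → S → ℝ) (π : S → A → ℝ) (Q Q' : S → A → ℝ) (s : S) (a : A) :
    nextValue W π (Q - Q') s a = nextValue W π Q s a - nextValue W π Q' s a := by
  simp only [nextValue, Pi.sub_apply, mul_sub, sum_sub_distrib]

theorem norm_nextValue_le {W : S → A → S → ℝ} {π : S → A → ℝ}
    (hW : ∀ s a, (∀ s', 0 ≤ W s a s') ∧ ∑ s', W s a s' = 1)
    (hπ : ∀ s, (∀ a, 0 ≤ π s a) ∧ ∑ a, π s a = 1) (Q : S → A → ℝ) :
    ‖nextValue W π Q‖ ≤ ‖Q‖ := by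
  have hnext : ∀ s', ‖∑ a', π s' a' * Q s' a'‖ ≤ ‖Q‖ := fun s' =>
    norm_sum_smul_le_of_sum_eq_one (hπ s').1 (hπ s').2
      fun a' => (norm_le_pi_norm (Q s') a').trans (norm_le_pi_norm Q s')
  refine pi_norm_le_iff_of_nonneg (norm_nonneg Q) |>.2 fun s => ?_
  exact pi_norm_le_iff_of_nonneg (norm_nonneg Q) |>.2 fun a =>
    norm_sum_smul_le_of_sum_eq_one (hW s a).1 (hW s a).2 hnext

theorem norm_sub_le_of_policy_evaluation {W : S → A → S → ℝ} {π : S → A → ℝ}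
    (hW : ∀ s a, (∀ s', 0 ≤ W s a s') ∧ ∑ s', W s a s' = 1)
    (hπ : ∀ s, (∀ a, 0 ≤ π s a) ∧ ∑ a, π s a = 1)
    {γ : ℝ} (hγ0 : 0 ≤ γ) (hγ1 : γ < 1) {R R' Q Q' : S → A → ℝ}
    (hQ : ∀ s a, Q s a = R s a + γ * nextValue W π Q s a)
    (hQ' : ∀ s a, Q' s a = R' s a + γ * nextValue W π Q' s a) :
    ‖Q - Q'‖ ≤ ‖R - R'‖ / (1 - γ) := by
  have hD : Q - Q' = (R - R') + γ • nextValue W π (Q - Q') := by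
    ext s a
    simp only [Pi.add_apply, Pi.sub_apply, Pi.smul_apply, smul_eq_mul, nextValue_sub, hQ s a,
      hQ' s a]
    ring
  have hcontract : ‖Q - Q'‖ ≤ ‖R - R'‖ + γ * ‖Q - Q'‖ :=
    calc ‖Q - Q'‖ = ‖(R - R') + γ • nextValue W π (Q - Q')‖ := congrArg norm hD
      _ ≤ ‖R - R'‖ + ‖γ • nextValue W π (Q - Q')‖ := norm_add_le _ _
      _ ≤ ‖R - R'‖ + γ * ‖Q - Q'‖ := by
        rw [norm_smul, Real.norm_of_nonneg hγ0]
        gcongr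
        exact norm_nextValue_le hW hπ _
  rw [le_div_iff₀ (by linarith)]
  linarith

end PolicyEvaluation

section Absorbing

variable {S A : Type*} [Fintype S] [DecidableEq S]

def absorbingKernel (P : S → A → S → ℝ) (s₀ : S) (s : S) (a : A) (s' : S) : ℝ :=
  if s = s₀ then (if s' = s₀ then 1 else 0) else P s a s'

theorem absorbingKernel_stochastic {P : S → A → S → ℝ}
    (hP : ∀ s a, (∀ s', 0 ≤ P s a s') ∧ ∑ s', P s a s' = 1) (s₀ : S) (s : S) (a : A) :
    (∀ s', 0 ≤ absorbingKernel P s₀ s a s') ∧ ∑ s', absorbingKernel P s₀ s a s' = 1 := by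
  unfold absorbingKernel
  split_ifs
  · exact ⟨fun s' => by split_ifs <;> norm_num, by simp⟩
  · exact hP s a

def absorbingReward (r : S → A → ℝ) (s₀ : S) (γ u : ℝ) (s : S) (a : A) : ℝ :=
  if s = s₀ then (1 - γ) * u else r s a

theorem norm_absorbingReward_sub_le [Fintype A] (r : S → A → ℝ) (s₀ : S) {γ : ℝ} (hγ1 : γ < 1) (u u' : ℝ) :
    ‖absorbingReward r s₀ γ u - absorbingReward r s₀ γ u'‖ ≤ (1 - γ) * |u - u'| := by
  have hbound : 0 ≤ (1 - γ) * |u - u'| := mul_nonneg (by linarith) (abs_nonneg _)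
  refine pi_norm_le_iff_of_nonneg hbound |>.2 fun s => ?_
  refine pi_norm_le_iff_of_nonneg hbound |>.2 fun a => ?_
  by_cases hs : s = s₀
  · simp [absorbingReward, hs, ← mul_sub, abs_of_pos (sub_pos.2 hγ1)]
  · simpa [absorbingReward, hs] using hbound

end Absorbing

theorem absorbing_mdp_stability_general {S A : Type*} [Fintype S] [Fintype A]
    [DecidableEq S]
    (P : S → A → S → ℝ) (π : S → A → ℝ) (r : S → A → ℝ)
    (γ : ℝ) (hγ0 : 0 ≤ γ) (hγ1 : γ < 1)
    (hP : ∀ s a, (∀ s', 0 ≤ P s a s') ∧ ∑ s', P s a s' = 1)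
    (hπ : ∀ s, (∀ a, 0 ≤ π s a) ∧ ∑ a, π s a = 1)
    (s₀ : S) (u u' : ℝ) (Qu Qu' : S → A → ℝ)
    (hQu : ∀ s a, Qu s a =
        (if s = s₀ then (1 - γ) * u else r s a)
          + γ * ∑ s', (if s = s₀ then (if s' = s₀ then (1 : ℝ) else 0) else P s a s')
              * ∑ a', π s' a' * Qu s' a')
    (hQu' : ∀ s a, Qu' s a =
        (if s = s₀ then (1 - γ) * u' else r s a)
          + γ * ∑ s', (if s = s₀ then (if s' = s₀ then (1 : ℝ) else 0) else P s a s')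
              * ∑ a', π s' a' * Qu' s' a') :
    ∀ s a, |Qu s a - Qu' s a| ≤ |u - u'| := by
  intro s a
  have hgap : 0 < 1 - γ := by linarith
  have hnorm : ‖Qu - Qu'‖ ≤ |u - u'| :=
    calc ‖Qu - Qu'‖
        ≤ ‖absorbingReward r s₀ γ u - absorbingReward r s₀ γ u'‖ / (1 - γ) :=
          norm_sub_le_of_policy_evaluation (absorbingKernel_stochastic hP s₀) hπ hγ0 hγ1 hQu hQu'
      _ ≤ (1 - γ) * |u - u'| / (1 - γ) := by
          gcongr
          exact norm_absorbingReward_sub_le r s₀ hγ1 u u'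
      _ = |u - u'| := mul_div_cancel_left₀ _ hgap.ne'
  calc |Qu s a - Qu' s a| = ‖(Qu - Qu') s a‖ := rfl
    _ ≤ ‖Qu - Qu'‖ := (norm_le_pi_norm _ a).trans (norm_le_pi_norm _ s)
    _ ≤ |u - u'| := hnorm

/-- let `M_{s₀,u}` be the MDP identical to `M` except state `s₀` is absorbing
with per-step reward `(1−γ)u`. For every stationary policy `π`, the Q-functions satisfy
`‖Q^π_{M_{s₀,u}} − Q^π_{M_{s₀,u'}}‖_∞ ≤ |u − u'|`. -/
theorem absorbing_mdp_stability {S A : Type*} [Fintype S] [Fintype A] [Nonempty S] [Nonempty A]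
    [DecidableEq S]
    (P : S → A → S → ℝ) (π : S → A → ℝ) (r : S → A → ℝ)
    (γ : ℝ) (hγ0 : 0 ≤ γ) (hγ1 : γ < 1)
    (hP : ∀ s a, (∀ s', 0 ≤ P s a s') ∧ ∑ s', P s a s' = 1)
    (hπ : ∀ s, (∀ a, 0 ≤ π s a) ∧ ∑ a, π s a = 1)
    (hr : ∀ s a, 0 ≤ r s a ∧ r s a ≤ 1)
    (s₀ : S) (u u' : ℝ) (Qu Qu' : S → A → ℝ)
    (hQu : ∀ s a, Qu s a =
        (if s = s₀ then (1 - γ) * u else r s a)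
          + γ * ∑ s', (if s = s₀ then (if s' = s₀ then (1 : ℝ) else 0) else P s a s')
              * ∑ a', π s' a' * Qu s' a')
    (hQu' : ∀ s a, Qu' s a =
        (if s = s₀ then (1 - γ) * u' else r s a)
          + γ * ∑ s', (if s = s₀ then (if s' = s₀ then (1 : ℝ) else 0) else P s a s')
              * ∑ a', π s' a' * Qu' s' a') :
    ∀ s a, |Qu s a - Qu' s a| ≤ |u - u'| :=
  absorbing_mdp_stability_general P π r γ hγ0 hγ1 hP hπ s₀ u u' Qu Qu' hQu hQu'
end

section
/- Let p ∈ (1, ∞) and let Q(s,·) ∈ ℝ^A with A finite, and σ > 0 with σ ≤ max_a Q(s,a) − min_a Q(s,a) + σ (i.e., a solution exists in the stated interval). Then the function g(x) := ∑_a (Q(s,a) − x)^p · 1{Q(s,a) ≥ x} is continuous and strictly decreasing on (−∞, max_a Q(s,a)), tends to 0 as x → max_a Q(s,a), and satisfies g(max_a Q(s,a) − σ) ≥ σ^p; hence the equation g(x) = σ^p has a unique solution x* in [max_a Q(s,a) − σ, max_a Q(s,a)). -/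
/-!
Each summand `(q - x)₊ ^ p` is antitone in `x` and strictly decreasing below `q`, so `g` is
strictly decreasing below `M = max Q`, where it vanishes. The maximal summand alone gives
`g (M - σ) ≥ σ ^ p`; the intermediate value theorem then yields a root in `[M - σ, M)`, and
strict monotonicity makes it unique.
-/

open Filter Topology

theorem existsUnique_eq_of_strictAntiOn_Icc {f : ℝ → ℝ} {a b c : ℝ} (hab : a ≤ b)
    (hf : ContinuousOn f (Set.Icc a b)) (hanti : StrictAntiOn f (Set.Icc a b))
    (hfb : f b < c) (hfa : c ≤ f a) : ∃! x, x ∈ Set.Ico a b ∧ f x = c := by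
  obtain ⟨x, hx, hfx⟩ := intermediate_value_Icc' hab hf ⟨hfb.le, hfa⟩
  have hxb : x ≠ b := by rintro rfl; exact hfb.ne hfx
  refine ⟨x, ⟨⟨hx.1, lt_of_le_of_ne hx.2 hxb⟩, hfx⟩, ?_⟩
  rintro y ⟨hy, hfy⟩
  exact hanti.injOn (Set.Ico_subset_Icc_self hy) hx (hfy.trans hfx.symm)

section PosPartRpow

variable {p q x y : ℝ}

theorem continuous_posPart_sub_rpow (hp : 0 ≤ p) (q : ℝ) :
    Continuous fun x => max (q - x) 0 ^ p :=
  ((continuous_const.sub continuous_id).max continuous_const).rpow_const fun _ => Or.inr hp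

theorem antitone_posPart_sub_rpow (hp : 0 ≤ p) (q : ℝ) :
    Antitone fun x => max (q - x) 0 ^ p := fun _ _ hxy =>
  Real.rpow_le_rpow (le_max_right _ _) (max_le_max (by linarith) le_rfl) hp

theorem posPart_sub_rpow_lt_of_lt (hp : 0 < p) (hxy : x < y) (hy : y < q) :
    max (q - y) 0 ^ p < max (q - x) 0 ^ p := by
  rw [max_eq_left (by linarith), max_eq_left (by linarith)]
  exact Real.rpow_lt_rpow (by linarith) (by linarith) hp

theorem posPart_sub_rpow_eq_zero (hp : p ≠ 0) (hqx : q ≤ x) : max (q - x) 0 ^ p = 0 := by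
  rw [max_eq_right (by linarith), Real.zero_rpow hp]

end PosPartRpow

section SumPosPartRpow

variable {A : Type*} [Fintype A] {p : ℝ} (Q : A → ℝ)

theorem continuous_sum_posPart_sub_rpow (hp : 0 ≤ p) :
    Continuous fun x => ∑ a, max (Q a - x) 0 ^ p :=
  continuous_finsetSum _ fun a _ => continuous_posPart_sub_rpow hp (Q a)

theorem strictAntiOn_sum_posPart_sub_rpow (hp : 0 < p) (a₀ : A) :
    StrictAntiOn (fun x => ∑ a, max (Q a - x) 0 ^ p) (Set.Iic (Q a₀)) := by
  intro x _ y hy hxy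
  have hy : y ≤ Q a₀ := hy
  refine Finset.sum_lt_sum (fun a _ => antitone_posPart_sub_rpow hp.le (Q a) hxy.le)
    ⟨a₀, Finset.mem_univ _, ?_⟩
  rcases hy.lt_or_eq with hy | rfl
  · exact posPart_sub_rpow_lt_of_lt hp hxy hy
  · rw [posPart_sub_rpow_eq_zero hp.ne' le_rfl, max_eq_left (by linarith)]
    exact Real.rpow_pos_of_pos (by linarith) p

theorem sum_posPart_sub_rpow_eq_zero (hp : p ≠ 0) {x : ℝ} (hx : ∀ a, Q a ≤ x) :
    ∑ a, max (Q a - x) 0 ^ p = 0 :=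
  Finset.sum_eq_zero fun a _ => posPart_sub_rpow_eq_zero hp (hx a)

theorem posPart_sub_rpow_le_sum (a₀ : A) (x : ℝ) :
    max (Q a₀ - x) 0 ^ p ≤ ∑ a, max (Q a - x) 0 ^ p :=
  Finset.single_le_sum (f := fun a => max (Q a - x) 0 ^ p)
    (fun _ _ => Real.rpow_nonneg (le_max_right _ _) p) (Finset.mem_univ a₀)

end SumPosPartRpow

/-- for `p ∈ (1,∞)`, `Q : A → ℝ` on a finite action set and `σ > 0`, the
function `g(x) = ∑_a (Q(a) − x)^p·1{Q(a) ≥ x}` is continuous, strictly decreasing on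
`(−∞, max_a Q(a))`, tends to `0` as `x → max_a Q(a)`, and satisfies
`g(max_a Q(a) − σ) ≥ σ^p`; hence the equation `g(x) = σ^p` has a unique solution in
`[max_a Q(a) − σ, max_a Q(a))`. -/
theorem robust_bellman_scalar_root {A : Type*} [Fintype A] [Nonempty A]
    (p : ℝ) (hp : 1 < p) (Q : A → ℝ) (σ : ℝ) (hσ : 0 < σ) :
    let M : ℝ := ⨆ a, Q a
    let g : ℝ → ℝ := fun x => ∑ a, (max (Q a - x) 0) ^ p
    Continuous g ∧
    StrictAntiOn g (Set.Iio M) ∧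
    Tendsto g (𝓝[<] M) (𝓝 0) ∧
    σ ^ p ≤ g (M - σ) ∧
    ∃! x : ℝ, x ∈ Set.Ico (M - σ) M ∧ g x = σ ^ p := by
  intro M g
  have hp0 : 0 < p := by linarith
  obtain ⟨a₀, ha₀⟩ : ∃ a₀, Q a₀ = M := exists_eq_ciSup_of_finite
  have hgcont : Continuous g := continuous_sum_posPart_sub_rpow Q hp0.le
  have hanti : StrictAntiOn g (Set.Iic M) := ha₀ ▸ strictAntiOn_sum_posPart_sub_rpow Q hp0 a₀
  have hgM : g M = 0 := sum_posPart_sub_rpow_eq_zero Q hp0.ne' fun a =>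
    le_ciSup (Set.finite_range Q).bddAbove a
  have hσp : σ ^ p ≤ g (M - σ) := by
    simpa [← ha₀, hσ.le] using posPart_sub_rpow_le_sum Q (p := p) a₀ (M - σ)
  refine ⟨hgcont, hanti.mono Set.Iio_subset_Iic_self, ?_, hσp, ?_⟩
  · simpa [hgM] using (hgcont.tendsto M).mono_left nhdsWithin_le_nhds
  · exact existsUnique_eq_of_strictAntiOn_Icc (by linarith) hgcont.continuousOn
      (hanti.mono Set.Icc_subset_Iic_self) (hgM ▸ Real.rpow_pos_of_pos hσ p) hσp
end
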